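/- Let a be a symmetric, unit-variance random variable with E|a|³ < ∞, let the random vector a ∈ ℝ^n have i.i.d. coordinates distributed as a, let x ∈ S^{n−1}, and set v_x := E[ sign(⟨a, x⟩)·a ]. There is an absolute constant c such that if ‖x‖_∞ ≤ c/E|a|³, then 1/2 ≤ ‖v_x‖_2 ≤ 1. -/

import Mathlib

open MeasureTheory ProbabilityTheory Real
open scoped ENNReal NNReal Pointwise BigOperators

noncomputable section

/-- Dot product on `Fin n → ℝ`. -/
def dot {n : ℕ} (u v : Fin n → ℝ) : ℝ := ∑ j, u j * v j

/-- Squared Euclidean norm. -/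
def sq2 {n : ℕ} (u : Fin n → ℝ) : ℝ := ∑ j, (u j) ^ 2

/-- Sup norm (max absolute coordinate). -/
def linf {n : ℕ} (u : Fin n → ℝ) : ℝ := ⨆ j, |u j|

/-- Unit Euclidean ball. -/
def ball2 (n : ℕ) : Set (Fin n → ℝ) := {u | sq2 u ≤ 1}

/-- Sign function, with `psign 0 = 1`. -/
def psign (t : ℝ) : ℝ := if 0 ≤ t then 1 else -1

/-- Standard Gaussian measure on `Fin n → ℝ`. -/
def stdGaussianPi (n : ℕ) : Measure (Fin n → ℝ) := Measure.pi fun _ => gaussianReal 0 1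

/-- Gaussian mean width `w(K) = E sup_{z ∈ K - K} ⟨g, z⟩`. -/
def meanWidth {n : ℕ} (K : Set (Fin n → ℝ)) : ℝ :=
  ∫ g, sSup ((fun z => dot g z) '' (K - K)) ∂(stdGaussianPi n)

/-- Law of a random sign: `1` with probability `1 - p`, `-1` with probability `p`. -/
def flipLaw (p : ℝ) : Measure ℝ :=
  ENNReal.ofReal (1 - p) • Measure.dirac (1 : ℝ) + ENNReal.ofReal p • Measure.dirac (-1 : ℝ)

/-!
Write `S = ⟨a, x⟩`. Since `⟨v_x, u⟩ = E[sign(S) ⟨a, u⟩]`, we have `⟨v_x, x⟩ = E|S|` and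
`‖v_x‖² = E[sign(S) ⟨a, v_x⟩] ≤ E|⟨a, v_x⟩| ≤ (E⟨a, v_x⟩²)^{1/2} = ‖v_x‖`, because the coordinates
of `a` are centred, uncorrelated and of unit variance. This is the upper bound, and by
Cauchy–Schwarz the lower bound reduces to `E|S| ≥ 1/2`.

For that, `|s| ≥ ½ ∫₀^T (1 - cos ts) / t² dt`, so `E|S| ≥ ½ ∫₀^T (1 - φ(t)) / t² dt`, where
`φ(t) = E cos(tS) = ∏ᵢ E cos(t xᵢ a)` by independence and symmetry. A third-order Taylor bound on
each factor gives `φ(t) ≤ exp(-9t²/20)` for `t ≤ 12` as soon as `‖x‖_∞ ≤ 1 / (40 E|a|³)`, and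
`∫₀^12 (1 - exp(-9t²/20)) / t² dt ≥ 1`.
-/

namespace Real

theorem cos_le_one_sub_sq_div_two_add_abs_pow_three_div_six (x : ℝ) :
    cos x ≤ 1 - x ^ 2 / 2 + |x| ^ 3 / 6 := by
  wlog hx : 0 ≤ x
  · simpa using this (-x) (by linarith)
  let f (t : ℝ) : ℝ := 1 - t ^ 2 / 2 + t ^ 3 / 6 - cos t
  have hderiv (t : ℝ) : deriv f t = sin t - t + t ^ 2 / 2 := by
    simp (disch := fun_prop) only [f, deriv_fun_sub, deriv_fun_add, deriv_const', deriv_div_const,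
      deriv_fun_pow, Nat.cast_ofNat, Nat.add_one_sub_one, pow_one, deriv_id'', mul_one, zero_sub,
      deriv_cos', sub_neg_eq_add]
    ring
  have hmono : MonotoneOn f (Set.Ici 0) := by
    refine monotoneOn_of_deriv_nonneg (convex_Ici 0) (by fun_prop) (by fun_prop) fun t ht => ?_
    rw [interior_Ici] at ht
    rw [hderiv]
    rcases le_or_gt t 3 with h | h
    · nlinarith [sin_ge_sub_cube ht.le, mul_nonneg (sq_nonneg t) (sub_nonneg.2 h)]
    · nlinarith [neg_one_le_sin t]
  have := hmono Set.self_mem_Ici hx hx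
  simp only [f, abs_of_nonneg hx] at this ⊢
  norm_num at this
  linarith

theorem exp_neg_le_one_sub_add_sq_div_two {x : ℝ} (hx : 0 ≤ x) :
    exp (-x) ≤ 1 - x + x ^ 2 / 2 := by
  let f (t : ℝ) : ℝ := 1 - t + t ^ 2 / 2 - exp (-t)
  have hderiv (t : ℝ) : deriv f t = t - 1 + exp (-t) := by
    simp (disch := fun_prop) only [f, deriv_fun_sub, deriv_fun_add, deriv_const_sub_id',
      deriv_div_const, deriv_fun_pow, Nat.cast_ofNat, Nat.add_one_sub_one, pow_one, deriv_id'',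
      mul_one, _root_.deriv_exp, deriv_neg'', mul_neg, sub_neg_eq_add]
    ring
  have hmono : MonotoneOn f (Set.Ici 0) := by
    refine monotoneOn_of_deriv_nonneg (convex_Ici 0) (by fun_prop) (by fun_prop) fun t _ => ?_
    rw [hderiv]
    linarith [add_one_le_exp (-t)]
  have := hmono Set.self_mem_Ici hx hx
  simp only [f] at this
  norm_num at this
  linarith

end Real

section OneSubCos

lemma one_sub_cos_mul_div_sq_nonneg (s t : ℝ) : 0 ≤ (1 - cos (t * s)) / t ^ 2 :=
  div_nonneg (sub_nonneg.2 (cos_le_one _)) (sq_nonneg t)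

lemma one_sub_cos_mul_div_sq_le (s t : ℝ) : (1 - cos (t * s)) / t ^ 2 ≤ s ^ 2 / 2 := by
  rcases eq_or_ne t 0 with rfl | ht
  · simp only [zero_pow two_ne_zero, div_zero]
    positivity
  · rw [div_le_iff₀ (by positivity)]
    nlinarith [one_sub_sq_div_two_le_cos (x := t * s)]

lemma one_sub_cos_mul_div_sq_le_two_mul_inv_sq (s t : ℝ) :
    (1 - cos (t * s)) / t ^ 2 ≤ 2 * (t ^ 2)⁻¹ := by
  rw [div_eq_mul_inv]
  exact mul_le_mul_of_nonneg_right (by linarith [neg_one_le_cos (t * s)]) (by positivity)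

lemma measurable_one_sub_cos_mul_div_sq :
    Measurable fun p : ℝ × ℝ => (1 - cos (p.1 * p.2)) / p.1 ^ 2 := by
  fun_prop

lemma intervalIntegrable_one_sub_cos_mul_div_sq (s a b : ℝ) :
    IntervalIntegrable (fun t => (1 - cos (t * s)) / t ^ 2) volume a b := by
  refine IntervalIntegrable.mono_fun' (g := fun _ => s ^ 2 / 2) intervalIntegrable_const
    (measurable_one_sub_cos_mul_div_sq.comp (measurable_id.prodMk measurable_const)
      ).aestronglyMeasurable (ae_of_all _ fun t => ?_)
  dsimp only
  rw [norm_of_nonneg (one_sub_cos_mul_div_sq_nonneg s t)]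
  exact one_sub_cos_mul_div_sq_le s t

lemma integral_inv_sq_of_pos {a b : ℝ} (ha : 0 < a) (hab : a ≤ b) :
    ∫ t in a..b, (t ^ 2)⁻¹ = a⁻¹ - b⁻¹ := by
  have h0 : (0 : ℝ) ∉ Set.uIcc a b := by
    rw [Set.uIcc_of_le hab]
    exact fun h => ha.not_ge h.1
  have := integral_zpow (a := a) (b := b) (n := -2) (Or.inr ⟨by norm_num, h0⟩)
  norm_num [zpow_neg] at this
  rw [this]
  ring

/-- The truncated form of `|s| = (2 / π) ∫₀^∞ (1 - cos (t s)) / t² dt`, with the crude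
constant `2 ≥ π / 2`: split the integral at `2 / |s|`, using `1 - cos u ≤ u² / 2` before and
`1 - cos u ≤ 2` after. -/
lemma integral_one_sub_cos_mul_div_sq_le (s : ℝ) {T : ℝ} (hT : 0 ≤ T) :
    ∫ t in 0..T, (1 - cos (t * s)) / t ^ 2 ≤ 2 * |s| := by
  rcases eq_or_ne s 0 with rfl | hs
  · simp
  set r := 2 / |s|
  have hr : 0 < r := by positivity
  have habs : 0 < |s| := abs_pos.2 hs
  have hr_mul : r * (s ^ 2 / 2) = |s| := by
    simp only [r]
    rw [← sq_abs]
    field_simp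
  have hhead {c : ℝ} (hc : 0 ≤ c) (hcr : c ≤ r) :
      ∫ t in 0..c, (1 - cos (t * s)) / t ^ 2 ≤ |s| := by
    calc ∫ t in 0..c, (1 - cos (t * s)) / t ^ 2 ≤ ∫ _ in 0..c, s ^ 2 / 2 :=
          intervalIntegral.integral_mono_on hc (intervalIntegrable_one_sub_cos_mul_div_sq s 0 c)
            intervalIntegrable_const fun t _ => one_sub_cos_mul_div_sq_le s t
      _ = c * (s ^ 2 / 2) := by simp [mul_div_assoc]
      _ ≤ |s| := hr_mul ▸ mul_le_mul_of_nonneg_right hcr (by positivity)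
  rcases le_or_gt T r with hTr | hrT
  · linarith [hhead hT hTr, abs_nonneg s]
  have htail : ∫ t in r..T, (1 - cos (t * s)) / t ^ 2 ≤ |s| := by
    calc ∫ t in r..T, (1 - cos (t * s)) / t ^ 2 ≤ ∫ t in r..T, 2 * (t ^ 2)⁻¹ := by
          refine intervalIntegral.integral_mono_on hrT.le
            (intervalIntegrable_one_sub_cos_mul_div_sq s r T) ?_
            fun t _ => one_sub_cos_mul_div_sq_le_two_mul_inv_sq s t
          refine (continuousOn_const.mul (continuousOn_inv₀.comp (continuousOn_pow 2)
            fun t ht => ?_)).intervalIntegrable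
          rw [Set.uIcc_of_le hrT.le] at ht
          exact pow_ne_zero 2 (hr.trans_le ht.1).ne'
      _ = 2 * (r⁻¹ - T⁻¹) := by
          rw [intervalIntegral.integral_const_mul, integral_inv_sq_of_pos hr hrT.le]
      _ ≤ |s| := by
          have : 2 * r⁻¹ = |s| := by simp only [r]; field_simp
          linarith [inv_nonneg.2 hT]
  rw [← intervalIntegral.integral_add_adjacent_intervals
    (intervalIntegrable_one_sub_cos_mul_div_sq s 0 r)
    (intervalIntegrable_one_sub_cos_mul_div_sq s r T)]
  linarith [hhead hr.le le_rfl]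

end OneSubCos

section AbsViaCos

variable {Ω : Type*} [MeasurableSpace Ω] {μ : Measure Ω} [IsProbabilityMeasure μ] {S : Ω → ℝ}

lemma integral_one_sub_cos_mul_div_sq (hS : AEStronglyMeasurable S μ) (t : ℝ) :
    ∫ ω, (1 - cos (t * S ω)) / t ^ 2 ∂μ = (1 - ∫ ω, cos (t * S ω) ∂μ) / t ^ 2 := by
  have hcos : Integrable (fun ω => cos (t * S ω)) μ :=
    .of_bound (continuous_cos.comp_aestronglyMeasurable (hS.const_mul t)) 1
      (ae_of_all _ fun ω => abs_cos_le_one _)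
  simp [integral_div, integral_sub (integrable_const 1) hcos]

lemma integrable_one_sub_cos_mul_div_sq_prod (hS : MemLp S 2 μ) (T : ℝ) :
    Integrable (fun p : ℝ × Ω => (1 - cos (p.1 * S p.2)) / p.1 ^ 2)
      ((volume.restrict (Set.Ioc 0 T)).prod μ) := by
  have : IsFiniteMeasure (volume.restrict (Set.Ioc (0 : ℝ) T)) :=
    isFiniteMeasure_restrict.2 measure_Ioc_lt_top.ne
  refine Integrable.mono' (g := fun p => S p.2 ^ 2 / 2) ?_ ?_ (ae_of_all _ fun p => ?_)
  · exact (hS.integrable_sq.div_const 2).comp_snd _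
  · exact (measurable_one_sub_cos_mul_div_sq.comp_aemeasurable
      (measurable_fst.aemeasurable.prodMk hS.aestronglyMeasurable.aemeasurable.comp_snd)
      ).aestronglyMeasurable
  · rw [Real.norm_eq_abs, abs_of_nonneg (one_sub_cos_mul_div_sq_nonneg _ _)]
    exact one_sub_cos_mul_div_sq_le _ _

lemma integrableOn_one_sub_integral_cos_mul_div_sq (hS : MemLp S 2 μ) (T : ℝ) :
    IntegrableOn (fun t => (1 - ∫ ω, cos (t * S ω) ∂μ) / t ^ 2) (Set.Ioc 0 T) :=
  (integrable_one_sub_cos_mul_div_sq_prod hS T).integral_prod_left.congr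
    (ae_of_all _ (integral_one_sub_cos_mul_div_sq hS.aestronglyMeasurable))

lemma integral_one_sub_integral_cos_mul_div_sq_le (hS : MemLp S 2 μ) {T : ℝ} (hT : 0 ≤ T) :
    ∫ t in 0..T, (1 - ∫ ω, cos (t * S ω) ∂μ) / t ^ 2 ≤ 2 * ∫ ω, |S ω| ∂μ := by
  have hint := integrable_one_sub_cos_mul_div_sq_prod hS T
  calc ∫ t in 0..T, (1 - ∫ ω, cos (t * S ω) ∂μ) / t ^ 2
      = ∫ t in Set.Ioc 0 T, ∫ ω, (1 - cos (t * S ω)) / t ^ 2 ∂μ := by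
        simp only [intervalIntegral.integral_of_le hT,
          integral_one_sub_cos_mul_div_sq hS.aestronglyMeasurable]
    _ = ∫ ω, (∫ t in Set.Ioc 0 T, (1 - cos (t * S ω)) / t ^ 2) ∂μ :=
        integral_integral_swap hint
    _ ≤ ∫ ω, 2 * |S ω| ∂μ := by
        refine integral_mono hint.integral_prod_right
          ((hS.integrable one_le_two).abs.const_mul 2) fun ω => ?_
        rw [← intervalIntegral.integral_of_le hT]
        exact integral_one_sub_cos_mul_div_sq_le (S ω) hT
    _ = 2 * ∫ ω, |S ω| ∂μ := integral_const_mul 2 _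

end AbsViaCos

section OneDimensionalLaw

variable {ν : Measure ℝ}

lemma integral_comp_neg_of_map_neg_eq (hsym : ν.map (fun t => -t) = ν) {E : Type*}
    [NormedAddCommGroup E] [NormedSpace ℝ E] (f : ℝ → E) :
    ∫ y, f (-y) ∂ν = ∫ y, f y ∂ν :=
  MeasurePreserving.integral_comp' (f := MeasurableEquiv.neg ℝ) ⟨measurable_neg, hsym⟩ f

lemma integral_id_eq_zero_of_map_neg_eq (hsym : ν.map (fun t => -t) = ν) : ∫ y, y ∂ν = 0 := by
  have := integral_comp_neg_of_map_neg_eq hsym fun y => y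
  rw [integral_neg] at this
  linarith

lemma integral_sin_mul_eq_zero_of_map_neg_eq (hsym : ν.map (fun t => -t) = ν) (u : ℝ) :
    ∫ y, sin (u * y) ∂ν = 0 := by
  have := integral_comp_neg_of_map_neg_eq hsym fun y => sin (u * y)
  simp only [mul_neg, sin_neg, integral_neg] at this
  linarith

lemma integral_cexp_mul_I_eq_integral_cos [IsFiniteMeasure ν]
    (hsym : ν.map (fun t => -t) = ν) (u : ℝ) :
    ∫ y, Complex.exp (↑(u * y) * Complex.I) ∂ν = ↑(∫ y, cos (u * y) ∂ν) := by
  have hcos : Integrable (fun y => cos (u * y)) ν :=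
    .of_bound (by fun_prop) 1 (ae_of_all _ fun y => abs_cos_le_one _)
  have hsin : Integrable (fun y => sin (u * y)) ν :=
    .of_bound (by fun_prop) 1 (ae_of_all _ fun y => abs_sin_le_one _)
  simp_rw [Complex.exp_mul_I, ← Complex.ofReal_cos, ← Complex.ofReal_sin]
  rw [integral_add hcos.ofReal (hsin.ofReal.mul_const _), integral_mul_const,
    integral_complex_ofReal, integral_complex_ofReal, integral_sin_mul_eq_zero_of_map_neg_eq hsym]
  simp

lemma integrable_sq_of_integral_sq_eq_one (h2 : ∫ t, t ^ 2 ∂ν = 1) :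
    Integrable (fun t => t ^ 2) ν := by
  by_contra h
  rw [integral_undef h] at h2
  exact zero_ne_one h2

lemma memLp_id_two_of_integral_sq_eq_one (h2 : ∫ t, t ^ 2 ∂ν = 1) : MemLp id 2 ν :=
  (memLp_two_iff_integrable_sq aestronglyMeasurable_id).2
    (integrable_sq_of_integral_sq_eq_one h2)

variable [IsProbabilityMeasure ν]

/-- Lyapunov's inequality `(E a²)^{3/2} ≤ E |a|³` for `E a² = 1`, from the pointwise
`3 t² ≤ 2 |t|³ + 1`. -/
lemma one_le_integral_abs_pow_three (h2 : ∫ t, t ^ 2 ∂ν = 1)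
    (hI3 : Integrable (fun t => |t| ^ 3) ν) : 1 ≤ ∫ t, |t| ^ 3 ∂ν := by
  have h2i := integrable_sq_of_integral_sq_eq_one h2
  have key : ∫ t, 3 * t ^ 2 ∂ν ≤ ∫ t, (2 * |t| ^ 3 + 1) ∂ν := by
    refine integral_mono (h2i.const_mul 3) ((hI3.const_mul 2).add (integrable_const 1))
      fun t => ?_
    have := sq_abs t
    nlinarith [abs_nonneg t, sq_nonneg (|t| - 1)]
  rw [integral_const_mul, h2, integral_add (hI3.const_mul 2) (integrable_const 1),
    integral_const_mul] at key
  simp only [integral_const, probReal_univ, smul_eq_mul, mul_one] at key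
  linarith

lemma one_sub_sq_div_two_le_integral_cos (h2 : ∫ t, t ^ 2 ∂ν = 1) (u : ℝ) :
    1 - u ^ 2 / 2 ≤ ∫ y, cos (u * y) ∂ν := by
  have h2i := integrable_sq_of_integral_sq_eq_one h2
  calc 1 - u ^ 2 / 2 = ∫ y, (1 - u ^ 2 / 2 * y ^ 2) ∂ν := by
        rw [integral_sub (integrable_const 1) (h2i.const_mul _), integral_const_mul, h2]
        simp
    _ ≤ ∫ y, cos (u * y) ∂ν := by
        refine integral_mono ((integrable_const 1).sub (h2i.const_mul _))
          (.of_bound (by fun_prop) 1 (ae_of_all _ fun y => abs_cos_le_one _)) fun y => ?_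
        have := one_sub_sq_div_two_le_cos (x := u * y)
        dsimp only
        linarith [show (u * y) ^ 2 = u ^ 2 * y ^ 2 by ring]

lemma integral_cos_le (h2 : ∫ t, t ^ 2 ∂ν = 1) (hI3 : Integrable (fun t => |t| ^ 3) ν)
    (u : ℝ) :
    ∫ y, cos (u * y) ∂ν ≤ 1 - u ^ 2 / 2 + |u| ^ 3 * (∫ t, |t| ^ 3 ∂ν) / 6 := by
  have h2i := integrable_sq_of_integral_sq_eq_one h2
  have hbound : Integrable (fun y => 1 - u ^ 2 / 2 * y ^ 2 + |u| ^ 3 / 6 * |y| ^ 3) ν :=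
    ((integrable_const 1).sub (h2i.const_mul _)).add (hI3.const_mul _)
  calc ∫ y, cos (u * y) ∂ν ≤ ∫ y, (1 - u ^ 2 / 2 * y ^ 2 + |u| ^ 3 / 6 * |y| ^ 3) ∂ν := by
        refine integral_mono (.of_bound (by fun_prop) 1 (ae_of_all _ fun y => abs_cos_le_one _))
          hbound fun y => ?_
        have := cos_le_one_sub_sq_div_two_add_abs_pow_three_div_six (u * y)
        rw [abs_mul, mul_pow, mul_pow] at this
        dsimp only
        linarith
    _ = 1 - u ^ 2 / 2 + |u| ^ 3 * (∫ t, |t| ^ 3 ∂ν) / 6 := by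
        rw [integral_add (f := fun y => 1 - u ^ 2 / 2 * y ^ 2)
            ((integrable_const 1).sub (h2i.const_mul _)) (hI3.const_mul _),
          integral_sub (integrable_const 1) (h2i.const_mul _), integral_const_mul,
          integral_const_mul, h2]
        simp only [integral_const, probReal_univ, smul_eq_mul, mul_one]
        ring

end OneDimensionalLaw

section ProductLaw

variable {n : ℕ} {ν : Measure ℝ} [IsProbabilityMeasure ν]

lemma memLp_dot (hν : MemLp id 2 ν) (w : Fin n → ℝ) :
    MemLp (fun v => dot v w) 2 (Measure.pi fun _ : Fin n => ν) :=
  memLp_finsetSum _ fun j _ =>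
    (hν.comp_measurePreserving (measurePreserving_eval _ j)).mul_const (w j)

lemma integral_dot_eq_zero (hsym : ν.map (fun t => -t) = ν) (hν : Integrable id ν)
    (w : Fin n → ℝ) : ∫ v, dot v w ∂(Measure.pi fun _ : Fin n => ν) = 0 := by
  simp only [dot]
  rw [integral_finsetSum _ fun j _ => (integrable_eval hν).mul_const (w j)]
  refine Finset.sum_eq_zero fun j _ => ?_
  rw [integral_mul_const, integral_eval, integral_id_eq_zero_of_map_neg_eq hsym, zero_mul]

lemma integral_dot_sq (hsym : ν.map (fun t => -t) = ν) (h2 : ∫ t, t ^ 2 ∂ν = 1)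
    (w : Fin n → ℝ) :
    ∫ v, dot v w ^ 2 ∂(Measure.pi fun _ : Fin n => ν) = sq2 w := by
  have hν := memLp_id_two_of_integral_sq_eq_one h2
  have hvar : Var[fun y => y; ν] = 1 := by
    rw [variance_of_integral_eq_zero aemeasurable_id' (integral_id_eq_zero_of_map_neg_eq hsym)]
    exact h2
  have hsum : (fun v => dot v w) = ∑ j, fun v : Fin n → ℝ => v j * w j := by
    ext v
    simp [dot]
  rw [← variance_of_integral_eq_zero (memLp_dot hν w).aemeasurable
      (integral_dot_eq_zero hsym (hν.integrable one_le_two) w),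
    hsum, variance_sum_pi (X := fun j y => y * w j) fun j => hν.mul_const (w j)]
  simp [variance_mul_const, hvar, sq2]

lemma sq_integral_abs_le_integral_sq {Ω : Type*} [MeasurableSpace Ω] {μ : Measure Ω}
    [IsProbabilityMeasure μ] {X : Ω → ℝ} (hX : MemLp X 2 μ) :
    (∫ ω, |X ω| ∂μ) ^ 2 ≤ ∫ ω, X ω ^ 2 ∂μ := by
  have := variance_nonneg (fun ω => |X ω|) μ
  rw [variance_eq_sub (X := fun ω => |X ω|) hX.abs] at this
  simpa [sq_abs] using this

lemma integral_abs_dot_le (hsym : ν.map (fun t => -t) = ν) (h2 : ∫ t, t ^ 2 ∂ν = 1)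
    (w : Fin n → ℝ) :
    ∫ v, |dot v w| ∂(Measure.pi fun _ : Fin n => ν) ≤ √(sq2 w) := by
  refine (le_abs_self _).trans (Real.abs_le_sqrt ?_)
  rw [← integral_dot_sq hsym h2]
  exact sq_integral_abs_le_integral_sq (memLp_dot (memLp_id_two_of_integral_sq_eq_one h2) w)

lemma integral_cos_mul_dot (hsym : ν.map (fun t => -t) = ν) (x : Fin n → ℝ) (t : ℝ) :
    ∫ v, cos (t * dot v x) ∂(Measure.pi fun _ : Fin n => ν)
      = ∏ i, ∫ y, cos (t * x i * y) ∂ν := by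
  have hsplit (v : Fin n → ℝ) : Complex.exp (↑(t * dot v x) * Complex.I)
      = ∏ i, Complex.exp (↑(t * x i * v i) * Complex.I) := by
    rw [← Complex.exp_sum, ← Finset.sum_mul]
    congr 2
    push_cast [dot, Finset.mul_sum]
    exact Finset.sum_congr rfl fun i _ => by ring
  have hexp : ∫ v, Complex.exp (↑(t * dot v x) * Complex.I) ∂(Measure.pi fun _ : Fin n => ν)
      = ↑(∏ i, ∫ y, cos (t * x i * y) ∂ν) := by
    simp_rw [hsplit]
    rw [integral_fintype_prod_eq_prod (fun i y => Complex.exp (↑(t * x i * y) * Complex.I)),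
      Complex.ofReal_prod]
    exact Finset.prod_congr rfl fun i _ => integral_cexp_mul_I_eq_integral_cos hsym (t * x i)
  have hint : Integrable (fun v => Complex.exp (↑(t * dot v x) * Complex.I))
      (Measure.pi fun _ : Fin n => ν) :=
    .of_bound (Continuous.aestronglyMeasurable (by simp only [dot]; fun_prop)) 1
      (ae_of_all _ fun v => by rw [Complex.norm_exp_ofReal_mul_I])
  calc ∫ v, cos (t * dot v x) ∂(Measure.pi fun _ : Fin n => ν)
      = ∫ v, RCLike.re (Complex.exp (↑(t * dot v x) * Complex.I))
          ∂(Measure.pi fun _ : Fin n => ν) := by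
        simp only [RCLike.re_to_complex, Complex.exp_ofReal_mul_I_re]
    _ = ∏ i, ∫ y, cos (t * x i * y) ∂ν := by
        rw [integral_re hint, hexp]
        rfl

end ProductLaw

section GaussianModel

variable {κ : ℝ}

lemma one_sub_exp_neg_mul_sq_div_sq_nonneg (hκ : 0 ≤ κ) (t : ℝ) :
    0 ≤ (1 - exp (-(κ * t ^ 2))) / t ^ 2 :=
  div_nonneg (sub_nonneg.2 (exp_le_one_iff.2 (by nlinarith [sq_nonneg t]))) (sq_nonneg t)

lemma one_sub_exp_neg_mul_sq_div_sq_le (hκ : 0 ≤ κ) (t : ℝ) :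
    (1 - exp (-(κ * t ^ 2))) / t ^ 2 ≤ κ := by
  rcases eq_or_ne t 0 with rfl | ht
  · simpa using hκ
  rw [div_le_iff₀ (by positivity)]
  linarith [add_one_le_exp (-(κ * t ^ 2))]

lemma intervalIntegrable_one_sub_exp_neg_mul_sq_div_sq (hκ : 0 ≤ κ) (a b : ℝ) :
    IntervalIntegrable (fun t => (1 - exp (-(κ * t ^ 2))) / t ^ 2) volume a b :=
  IntervalIntegrable.mono_fun' (g := fun _ => κ) intervalIntegrable_const
    (Measurable.aestronglyMeasurable (by fun_prop)) (ae_of_all _ fun t => by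
      dsimp only
      rw [norm_of_nonneg (one_sub_exp_neg_mul_sq_div_sq_nonneg hκ t)]
      exact one_sub_exp_neg_mul_sq_div_sq_le hκ t)

lemma sub_le_integral_one_sub_exp_neg_mul_sq_div_sq (hκ : 0 ≤ κ) {a : ℝ} (ha : 0 ≤ a) :
    κ * a - κ ^ 2 * a ^ 3 / 6 ≤ ∫ t in 0..a, (1 - exp (-(κ * t ^ 2))) / t ^ 2 := by
  have hpoly : ∫ t in 0..a, (κ - κ ^ 2 / 2 * t ^ 2) = κ * a - κ ^ 2 * a ^ 3 / 6 := by
    rw [intervalIntegral.integral_sub intervalIntegrable_const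
      ((continuous_pow 2).intervalIntegrable 0 a |>.const_mul _),
      intervalIntegral.integral_const, intervalIntegral.integral_const_mul, integral_pow]
    simp only [sub_zero, smul_eq_mul, zero_pow three_ne_zero]
    ring
  rw [← hpoly]
  refine intervalIntegral.integral_mono_on_of_le_Ioo ha
    ((by fun_prop : Continuous fun t : ℝ => κ - κ ^ 2 / 2 * t ^ 2).intervalIntegrable 0 a)
    (intervalIntegrable_one_sub_exp_neg_mul_sq_div_sq hκ 0 a) fun t ht => ?_
  rw [le_div_iff₀ (pow_pos ht.1 2)]
  nlinarith [exp_neg_le_one_sub_add_sq_div_two (x := κ * t ^ 2) (by positivity)]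

lemma mul_le_integral_one_sub_exp_neg_mul_sq_div_sq (hκ : 0 ≤ κ) {a b E : ℝ} (ha : 0 < a)
    (hab : a ≤ b) (hE : exp (-(κ * a ^ 2)) ≤ E) :
    (1 - E) * (a⁻¹ - b⁻¹) ≤ ∫ t in a..b, (1 - exp (-(κ * t ^ 2))) / t ^ 2 := by
  have hpos {t : ℝ} (ht : t ∈ Set.uIcc a b) : 0 < t := by
    rw [Set.uIcc_of_le hab] at ht
    exact ha.trans_le ht.1
  rw [← integral_inv_sq_of_pos ha hab, ← intervalIntegral.integral_const_mul]
  refine intervalIntegral.integral_mono_on hab ?_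
    (intervalIntegrable_one_sub_exp_neg_mul_sq_div_sq hκ a b) fun t ht => ?_
  · exact (continuousOn_const.mul (continuousOn_inv₀.comp (continuousOn_pow 2)
      fun t ht => pow_ne_zero 2 (hpos ht).ne')).intervalIntegrable
  · have hmono : exp (-(κ * t ^ 2)) ≤ exp (-(κ * a ^ 2)) :=
      exp_le_exp.2 (neg_le_neg (mul_le_mul_of_nonneg_left
        (pow_le_pow_left₀ ha.le ht.1 2) hκ))
    rw [← div_eq_mul_inv]
    exact div_le_div_of_nonneg_right (by linarith) (sq_nonneg t)

/-- The full integral over `(0, ∞)` is `√(9π/20) ≈ 1.19`; truncating at `12` and the piecewise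
bounds lose less than `0.19`. -/
lemma one_le_integral_one_sub_exp_neg_mul_sq_div_sq :
    1 ≤ ∫ t in 0..12, (1 - exp (-(9 / 20 * t ^ 2))) / t ^ 2 := by
  have hκ : (0 : ℝ) ≤ 9 / 20 := by norm_num
  have hint := intervalIntegrable_one_sub_exp_neg_mul_sq_div_sq hκ
  have hexp {a E : ℝ} (k : ℕ)
      (h : E⁻¹ ≤ ∑ i ∈ Finset.range k, (9 / 20 * a ^ 2) ^ i / i.factorial) (hE : 0 < E) :
      exp (-(9 / 20 * a ^ 2)) ≤ E := by
    rw [exp_neg]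
    exact inv_le_of_inv_le₀ hE (h.trans (sum_le_exp_of_nonneg (by positivity) k))
  rw [← intervalIntegral.integral_add_adjacent_intervals (hint 0 1) (hint 1 12),
    ← intervalIntegral.integral_add_adjacent_intervals (hint 1 (3 / 2)) (hint (3 / 2) 12),
    ← intervalIntegral.integral_add_adjacent_intervals (hint (3 / 2) 2) (hint 2 12),
    ← intervalIntegral.integral_add_adjacent_intervals (hint 2 3) (hint 3 12)]
  have h0 := sub_le_integral_one_sub_exp_neg_mul_sq_div_sq hκ zero_le_one
  have h1 := mul_le_integral_one_sub_exp_neg_mul_sq_div_sq hκ one_pos (by norm_num)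
    (hexp (a := 1) (E := 16 / 25) 4 (by norm_num [Finset.sum_range_succ]) (by norm_num))
    (b := 3 / 2)
  have h2 := mul_le_integral_one_sub_exp_neg_mul_sq_div_sq hκ (a := 3 / 2) (b := 2)
    (by norm_num) (by norm_num)
    (hexp (E := 37 / 100) 5 (by norm_num [Finset.sum_range_succ, Nat.factorial]) (by norm_num))
  have h3 := mul_le_integral_one_sub_exp_neg_mul_sq_div_sq hκ (a := 2) (b := 3)
    (by norm_num) (by norm_num)
    (hexp (E := 17 / 100) 6 (by norm_num [Finset.sum_range_succ, Nat.factorial]) (by norm_num))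
  have h4 := mul_le_integral_one_sub_exp_neg_mul_sq_div_sq hκ (a := 3) (b := 12)
    (by norm_num) (by norm_num)
    (hexp (E := 1 / 50) 8 (by norm_num [Finset.sum_range_succ, Nat.factorial]) (by norm_num))
  norm_num at h0 h1 h2 h3 h4
  linarith

end GaussianModel

section LowerBound

variable {n : ℕ} {ν : Measure ℝ} [IsProbabilityMeasure ν]

lemma prod_integral_cos_le_exp_sum (h2 : ∫ t, t ^ 2 ∂ν = 1)
    (hI3 : Integrable (fun t => |t| ^ 3) ν) (x : Fin n → ℝ) (t : ℝ)
    (hsmall : ∀ i, (t * x i) ^ 2 ≤ 2) :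
    ∏ i, ∫ y, cos (t * x i * y) ∂ν
      ≤ exp (∑ i, (|t * x i| ^ 3 * (∫ s, |s| ^ 3 ∂ν) / 6 - (t * x i) ^ 2 / 2)) := by
  rw [exp_sum]
  refine Finset.prod_le_prod (fun i _ => ?_) fun i _ => ?_
  · linarith [one_sub_sq_div_two_le_integral_cos h2 (t * x i), hsmall i]
  · linarith [integral_cos_le h2 hI3 (t * x i),
      add_one_le_exp (|t * x i| ^ 3 * (∫ s, |s| ^ 3 ∂ν) / 6 - (t * x i) ^ 2 / 2)]

/-- For `t ≤ 12` the cubic Taylor terms cost at most `t² / 20` of the `t² / 2`. -/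
lemma prod_integral_cos_le_exp_of_abs_le (h2 : ∫ t, t ^ 2 ∂ν = 1)
    (hI3 : Integrable (fun t => |t| ^ 3) ν) {x : Fin n → ℝ} (hx : sq2 x = 1)
    (hsmall : ∀ i, (∫ t, |t| ^ 3 ∂ν) * |x i| ≤ 1 / 40) {t : ℝ} (ht : t ∈ Set.Icc (0 : ℝ) 12) :
    ∏ i, ∫ y, cos (t * x i * y) ∂ν ≤ exp (-(9 / 20 * t ^ 2)) := by
  set m := ∫ t, |t| ^ 3 ∂ν
  have hm : 1 ≤ m := one_le_integral_abs_pow_three h2 hI3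
  have hterm (i : Fin n) : |t * x i| ^ 3 * m = (t * x i) ^ 2 * (t * (m * |x i|)) := by
    rw [abs_mul, abs_of_nonneg ht.1, mul_pow, pow_succ |x i|, sq_abs]
    ring
  have htx (i : Fin n) : t * (m * |x i|) ≤ 3 / 10 := by
    nlinarith [hsmall i, ht.1, ht.2, mul_nonneg (zero_le_one.trans hm) (abs_nonneg (x i))]
  have hsq (i : Fin n) : (t * x i) ^ 2 ≤ 2 := by
    have : |x i| ≤ 1 / 40 := by nlinarith [hsmall i, abs_nonneg (x i)]
    have : t * |x i| ≤ 3 / 10 := by nlinarith [abs_nonneg (x i), ht.1, ht.2]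
    rw [← sq_abs, abs_mul, abs_of_nonneg ht.1]
    nlinarith [mul_nonneg ht.1 (abs_nonneg (x i))]
  refine (prod_integral_cos_le_exp_sum h2 hI3 x t hsq).trans (exp_le_exp.2 ?_)
  calc ∑ i, (|t * x i| ^ 3 * m / 6 - (t * x i) ^ 2 / 2)
      ≤ ∑ i, -(9 / 20 * t ^ 2) * x i ^ 2 := Finset.sum_le_sum fun i _ => by
        rw [hterm]
        nlinarith [mul_le_mul_of_nonneg_left (htx i) (sq_nonneg (t * x i))]
    _ = -(9 / 20 * t ^ 2) := by rw [← Finset.mul_sum, ← sq2, hx, mul_one]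

lemma half_le_integral_abs_dot (hsym : ν.map (fun t => -t) = ν) (h2 : ∫ t, t ^ 2 ∂ν = 1)
    (hI3 : Integrable (fun t => |t| ^ 3) ν) {x : Fin n → ℝ} (hx : sq2 x = 1)
    (hsmall : ∀ i, (∫ t, |t| ^ 3 ∂ν) * |x i| ≤ 1 / 40) :
    1 / 2 ≤ ∫ v, |dot v x| ∂(Measure.pi fun _ : Fin n => ν) := by
  have hS := memLp_dot (memLp_id_two_of_integral_sq_eq_one h2) x
  have hint : IntervalIntegrable
      (fun t => (1 - ∫ v, cos (t * dot v x) ∂(Measure.pi fun _ : Fin n => ν)) / t ^ 2)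
      volume 0 12 :=
    (intervalIntegrable_iff_integrableOn_Ioc_of_le (by norm_num)).2
      (integrableOn_one_sub_integral_cos_mul_div_sq hS 12)
  have hmono : ∫ t in 0..12, (1 - exp (-(9 / 20 * t ^ 2))) / t ^ 2
      ≤ ∫ t in 0..12, (1 - ∫ v, cos (t * dot v x) ∂(Measure.pi fun _ : Fin n => ν)) / t ^ 2 :=
    intervalIntegral.integral_mono_on (by norm_num)
      (intervalIntegrable_one_sub_exp_neg_mul_sq_div_sq (by norm_num) 0 12) hint fun t ht => by
        rw [integral_cos_mul_dot hsym]
        exact div_le_div_of_nonneg_right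
          (by linarith [prod_integral_cos_le_exp_of_abs_le h2 hI3 hx hsmall ht]) (sq_nonneg t)
  linarith [one_le_integral_one_sub_exp_neg_mul_sq_div_sq,
    integral_one_sub_integral_cos_mul_div_sq_le hS (T := 12) (by norm_num)]

end LowerBound

section SignVector

lemma psign_mul_self (t : ℝ) : psign t * t = |t| := by
  unfold psign
  split_ifs with h
  · rw [one_mul, abs_of_nonneg h]
  · rw [neg_one_mul, abs_of_neg (not_le.1 h)]

lemma abs_psign (t : ℝ) : |psign t| = 1 := by
  unfold psign
  split_ifs <;> simp

lemma measurable_psign : Measurable psign :=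
  Measurable.ite measurableSet_Ici measurable_const measurable_const

lemma dot_le_sqrt_sq2_mul_sqrt_sq2 {n : ℕ} (u v : Fin n → ℝ) :
    dot u v ≤ √(sq2 u) * √(sq2 v) :=
  Real.sum_mul_le_sqrt_mul_sqrt _ u v

variable {n : ℕ} {ν : Measure ℝ} [IsProbabilityMeasure ν]

lemma dot_integral_psign_dot_mul (hν : Integrable id ν) (x u : Fin n → ℝ) :
    dot (fun j => ∫ v, psign (dot v x) * v j ∂(Measure.pi fun _ : Fin n => ν)) u
      = ∫ v, psign (dot v x) * dot v u ∂(Measure.pi fun _ : Fin n => ν) := by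
  have hint (j : Fin n) : Integrable (fun v => psign (dot v x) * v j * u j)
      (Measure.pi fun _ : Fin n => ν) := by
    refine ((integrable_eval hν).bdd_mul (c := 1) ?_ (ae_of_all _ fun v => ?_)).mul_const _
    · exact (measurable_psign.comp (by simp only [dot]; fun_prop)).aestronglyMeasurable
    · rw [Real.norm_eq_abs, abs_psign]
  show ∑ j, (∫ v, psign (dot v x) * v j ∂(Measure.pi fun _ : Fin n => ν)) * u j = _
  simp_rw [← integral_mul_const]
  rw [← integral_finsetSum _ fun j _ => hint j]
  simp only [dot, Finset.mul_sum, mul_assoc]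

lemma integral_psign_mul_le_integral_abs {α : Type*} [MeasurableSpace α] {μ : Measure α}
    (f g : α → ℝ) : ∫ a, psign (f a) * g a ∂μ ≤ ∫ a, |g a| ∂μ :=
  (le_abs_self _).trans (abs_integral_le_integral_abs.trans_eq (by simp [abs_mul, abs_psign]))

end SignVector

/-- **Lemma 4.4.**  There is an absolute constant `c > 0` such that the following holds.  Let
the random vector `a ∈ ℝⁿ` have i.i.d. coordinates distributed as a symmetric, unit-variance
random variable of law `ν` with `E|a|³ < ∞`, let `x ∈ Sⁿ⁻¹`, and set `v_x = E[sign(⟨a,x⟩) a]`.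
If `‖x‖_∞ ≤ c / E|a|³` then `1/2 ≤ ‖v_x‖₂ ≤ 1`. -/
theorem sign_expectation_vector_norm_bounds :
    ∃ c : ℝ, 0 < c ∧
      ∀ (n : ℕ) (ν : Measure ℝ) [IsProbabilityMeasure ν],
        ν.map (fun t => -t) = ν →
        (∫ t, t ^ 2 ∂ν) = 1 →
        Integrable (fun t => |t| ^ 3) ν →
        ∀ (x : Fin n → ℝ), sq2 x = 1 →
        linf x ≤ c / (∫ t, |t| ^ 3 ∂ν) →
        1 / 2 ≤
            Real.sqrt (sq2 fun j =>
              ∫ v, psign (dot v x) * v j ∂(Measure.pi fun _ : Fin n => ν)) ∧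
          Real.sqrt (sq2 fun j =>
              ∫ v, psign (dot v x) * v j ∂(Measure.pi fun _ : Fin n => ν)) ≤ 1 := by
  refine ⟨1 / 40, by norm_num, fun n ν _ hsym h2 hI3 x hx hlinf => ?_⟩
  set w : Fin n → ℝ := fun j => ∫ v, psign (dot v x) * v j ∂(Measure.pi fun _ : Fin n => ν)
  have hν : Integrable id ν := (memLp_id_two_of_integral_sq_eq_one h2).integrable one_le_two
  have hm : 0 < ∫ t, |t| ^ 3 ∂ν := one_pos.trans_le (one_le_integral_abs_pow_three h2 hI3)
  have hsmall (i : Fin n) : (∫ t, |t| ^ 3 ∂ν) * |x i| ≤ 1 / 40 := by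
    rw [← le_div_iff₀' hm]
    exact (le_ciSup (Set.finite_range _).bddAbove i).trans hlinf
  have hlow : 1 / 2 ≤ dot w x := by
    rw [dot_integral_psign_dot_mul hν]
    simp only [psign_mul_self]
    exact half_le_integral_abs_dot hsym h2 hI3 hx hsmall
  have hCS : dot w x ≤ √(sq2 w) := by
    simpa [hx] using dot_le_sqrt_sq2_mul_sqrt_sq2 w x
  have hup : sq2 w ≤ √(sq2 w) :=
    calc sq2 w = dot w w := by simp only [sq2, dot, sq]
      _ = ∫ v, psign (dot v x) * dot v w ∂(Measure.pi fun _ : Fin n => ν) :=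
        dot_integral_psign_dot_mul hν x w
      _ ≤ ∫ v, |dot v w| ∂(Measure.pi fun _ : Fin n => ν) :=
        integral_psign_mul_le_integral_abs _ _
      _ ≤ √(sq2 w) := integral_abs_dot_le hsym h2 w
  have hw0 : 0 ≤ sq2 w := Finset.sum_nonneg fun j _ => sq_nonneg (w j)
  exact ⟨hlow.trans hCS, by nlinarith [sq_sqrt hw0, sqrt_nonneg (sq2 w)]⟩

end
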